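/- arXiv:2604.23365 — 2 statements merged into one kernel-verified Lean document; each statement's English description precedes it below -/
import Mathlib

section
/- Let r ≥ 3, n ≥ r, and let K_n^{(r)} be the complete r-uniform hypergraph on {1,…,n}. (a) If (μ, z) is an eigenpair of the Laplacian L(K_n^{(r)}) with μ ≠ binom(n−1, r−1), then z is a non-main eigenvector if and only if ∑_{i=1}^n z_i^{r−1} = 0; moreover binom(n−1, r−1) is a non-main eigenvalue of L(K_n^{(r)}). (b) If (β, x) is an eigenpair of the signless Laplacian Q(K_n^{(r)}) with β ≠ binom(n−1, r−1), then x is a non-main eigenvector if and only if ∑_{i=1}^n x_i^{r−1} = 0; moreover binom(n−1, r−1) is a non-main eigenvalue of Q(K_n^{(r)}). -/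
open Finset
open scoped Classical

/-- The adjacency hypermatrix entry of an `r`-uniform hypergraph with hyperedge set `E`:
the `(j, f 0, …, f (r-2))`-entry is `1/(r-1)!` when the indices are pairwise distinct and
form a hyperedge, and `0` otherwise. -/
noncomputable def adjEntry (r : ℕ) {V : Type*} [Fintype V] [DecidableEq V]
    (E : Finset (Finset V)) (j : V) (f : Fin (r - 1) → V) : ℂ :=
  if Function.Injective f ∧ (∀ i, f i ≠ j) ∧ insert j (Finset.image f Finset.univ) ∈ E then
    1 / ((r - 1).factorial : ℂ)
  else 0

/-- The degree of a vertex: the number of hyperedges containing it. -/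
def hdegree {V : Type*} [DecidableEq V] (E : Finset (Finset V)) (v : V) : ℕ :=
  (E.filter fun e => v ∈ e).card

/-- The Laplacian hypermatrix entry `L = D - A`. -/
noncomputable def lapEntry (r : ℕ) {V : Type*} [Fintype V] [DecidableEq V]
    (E : Finset (Finset V)) (j : V) (f : Fin (r - 1) → V) : ℂ :=
  (if ∀ i, f i = j then (hdegree E j : ℂ) else 0) - adjEntry r E j f

/-- The signless Laplacian hypermatrix entry `Q = D + A`. -/
noncomputable def signlessEntry (r : ℕ) {V : Type*} [Fintype V] [DecidableEq V]
    (E : Finset (Finset V)) (j : V) (f : Fin (r - 1) → V) : ℂ :=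
  (if ∀ i, f i = j then (hdegree E j : ℂ) else 0) + adjEntry r E j f

/-- `(lam, x)` is an eigenpair of the order-`r` hypermatrix `T` (represented by its
first index and the remaining `r-1` indices). -/
def IsEigenpair {V : Type*} [Fintype V] (r : ℕ)
    (T : V → (Fin (r - 1) → V) → ℂ) (lam : ℂ) (x : V → ℂ) : Prop :=
  x ≠ 0 ∧ ∀ j, ∑ f : Fin (r - 1) → V, T j f * ∏ i, x (f i) = lam * x j ^ (r - 1)

/-- A vector is non-main if the sum over all `(r-1)`-subsets `S` of the vertex set of
`∏_{i ∈ S} x i` vanishes. -/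
def IsNonMainVec {V : Type*} [Fintype V] [DecidableEq V] (r : ℕ) (x : V → ℂ) : Prop :=
  ∑ S ∈ Finset.univ.powersetCard (r - 1), ∏ i ∈ S, x i = 0

/-- An eigenvalue is non-main if it has some non-main eigenvector. -/
def IsNonMainEigenvalue {V : Type*} [Fintype V] [DecidableEq V] (r : ℕ)
    (T : V → (Fin (r - 1) → V) → ℂ) (lam : ℂ) : Prop :=
  ∃ x, IsEigenpair r T lam x ∧ IsNonMainVec r x

/-- The complete `r`-uniform hypergraph on `n` vertices: all `r`-element subsets. -/
def completeEdges (r n : ℕ) : Finset (Finset (Fin n)) :=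
  Finset.univ.powersetCard r


-- fiber cardinality
lemma card_fiber {n k : ℕ} (S : Finset (Fin n)) (hS : S.card = k) :
    (Finset.univ.filter fun f : Fin k → Fin n => Finset.image f Finset.univ = S).card
      = k.factorial := by
  have hcard : Fintype.card {x // x ∈ S} = k := by simp [hS]
  have := Finset.card_bij
    (s := (Finset.univ : Finset (Fin k ≃ {x // x ∈ S})))
    (t := Finset.univ.filter fun f : Fin k → Fin n => Finset.image f Finset.univ = S)
    (i := fun e _ => fun i => (e i : Fin n)) ?hi ?inj ?surj
  · rw [← this, Finset.card_univ, Fintype.card_equiv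
      (Fintype.equivFinOfCardEq hcard).symm, Fintype.card_fin]
  case hi =>
    intro e _
    simp only [Finset.mem_filter, Finset.mem_univ, true_and]
    ext v
    simp only [Finset.mem_image, Finset.mem_univ, true_and]
    constructor
    · rintro ⟨i, rfl⟩; exact (e i).2
    · intro hv; exact ⟨e.symm ⟨v, hv⟩, by simp⟩
  case inj =>
    intro e _ e' _ h
    ext i
    have := congrFun h i
    exact congrArg Fin.val this
  case surj =>
    intro f hf
    simp only [Finset.mem_filter, Finset.mem_univ, true_and] at hf
    have hmem : ∀ i, f i ∈ S := fun i => hf ▸ Finset.mem_image_of_mem f (Finset.mem_univ i)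
    have hinjOn : Set.InjOn f ↑(Finset.univ : Finset (Fin k)) := by
      apply Finset.card_image_iff.mp
      rw [hf, hS, Finset.card_univ, Fintype.card_fin]
    have hinj : Function.Injective f := by
      rw [Finset.coe_univ] at hinjOn
      exact Set.injOn_univ.mp hinjOn
    have hg : Function.Bijective (fun i => (⟨f i, hmem i⟩ : {x // x ∈ S})) := by
      rw [Fintype.bijective_iff_injective_and_card]
      exact ⟨fun a b hab => hinj (congrArg Subtype.val hab), by simp [hcard]⟩
    exact ⟨Equiv.ofBijective _ hg, Finset.mem_univ _, rfl⟩

-- mem completeEdges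
lemma mem_completeEdges {r n : ℕ} {e : Finset (Fin n)} :
    e ∈ completeEdges r n ↔ e.card = r := by
  simp [completeEdges, Finset.mem_powersetCard]

lemma adjEntry_complete {r n : ℕ} (hr : 1 ≤ r) (j : Fin n) (f : Fin (r - 1) → Fin n) :
    adjEntry r (completeEdges r n) j f =
      if Function.Injective f ∧ ∀ i, f i ≠ j then 1 / ((r - 1).factorial : ℂ) else 0 := by
  unfold adjEntry
  congr 1
  rw [eq_iff_iff]
  constructor
  · rintro ⟨h1, h2, _⟩; exact ⟨h1, h2⟩
  · rintro ⟨h1, h2⟩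
    refine ⟨h1, h2, ?_⟩
    rw [mem_completeEdges]
    have hj : j ∉ Finset.image f Finset.univ := by
      simp only [Finset.mem_image, Finset.mem_univ, true_and, not_exists]
      exact fun i => h2 i
    rw [Finset.card_insert_of_notMem hj, Finset.card_image_of_injective _ h1,
      Finset.card_univ, Fintype.card_fin]
    omega

-- sum over injective avoiding functions = k! * sum over subsets
lemma sum_inj_avoid {n k : ℕ} (x : Fin n → ℂ) (j : Fin n) :
    ∑ f ∈ Finset.univ.filter (fun f : Fin k → Fin n =>
        Function.Injective f ∧ ∀ i, f i ≠ j), ∏ i, x (f i)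
      = (k.factorial : ℂ) *
        ∑ S ∈ ((Finset.univ : Finset (Fin n)).erase j).powersetCard k, ∏ v ∈ S, x v := by
  rw [Finset.mul_sum]
  rw [← Finset.sum_fiberwise_of_maps_to (g := fun f => Finset.image f Finset.univ)
    (t := ((Finset.univ : Finset (Fin n)).erase j).powersetCard k) ?hmaps
    (fun f => ∏ i, x (f i))]
  case hmaps =>
    intro f hf
    simp only [Finset.mem_filter, Finset.mem_univ, true_and] at hf
    rw [Finset.mem_powersetCard]
    constructor
    · intro v hv
      simp only [Finset.mem_image, Finset.mem_univ, true_and] at hv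
      obtain ⟨i, rfl⟩ := hv
      exact Finset.mem_erase.mpr ⟨hf.2 i, Finset.mem_univ _⟩
    · rw [Finset.card_image_of_injective _ hf.1, Finset.card_univ, Fintype.card_fin]
  refine Finset.sum_congr rfl fun S hS => ?_
  rw [Finset.mem_powersetCard] at hS
  have hset : (Finset.univ.filter (fun f : Fin k → Fin n =>
      Function.Injective f ∧ ∀ i, f i ≠ j)).filter
        (fun f => Finset.image f Finset.univ = S)
      = Finset.univ.filter (fun f => Finset.image f Finset.univ = S) := by
    ext f
    simp only [Finset.mem_filter, Finset.mem_univ, true_and]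
    constructor
    · tauto
    · intro hf
      have hinjOn : Set.InjOn f ↑(Finset.univ : Finset (Fin k)) := by
        apply Finset.card_image_iff.mp
        rw [hf, hS.2, Finset.card_univ, Fintype.card_fin]
      have hinj : Function.Injective f := by
        rw [Finset.coe_univ] at hinjOn
        exact Set.injOn_univ.mp hinjOn
      refine ⟨⟨hinj, fun i => ?_⟩, hf⟩
      have : f i ∈ S := hf ▸ Finset.mem_image_of_mem f (Finset.mem_univ i)
      exact Finset.ne_of_mem_erase (hS.1 this)
  rw [hset]
  have hterm : ∀ f ∈ Finset.univ.filter
      (fun f : Fin k → Fin n => Finset.image f Finset.univ = S),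
      ∏ i, x (f i) = ∏ v ∈ S, x v := by
    intro f hf
    simp only [Finset.mem_filter, Finset.mem_univ, true_and] at hf
    have hinjOn : Set.InjOn f ↑(Finset.univ : Finset (Fin k)) := by
      apply Finset.card_image_iff.mp
      rw [hf, hS.2, Finset.card_univ, Fintype.card_fin]
    rw [← hf, Finset.prod_image (fun a ha b hb hab => hinjOn ha hb hab)]
  rw [Finset.sum_congr rfl hterm, Finset.sum_const, card_fiber S hS.2, nsmul_eq_mul]

lemma adj_sum {r n : ℕ} (hr : 1 ≤ r) (x : Fin n → ℂ) (j : Fin n) :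
    ∑ f : Fin (r - 1) → Fin n, adjEntry r (completeEdges r n) j f * ∏ i, x (f i)
      = ∑ S ∈ ((Finset.univ : Finset (Fin n)).erase j).powersetCard (r - 1),
          ∏ v ∈ S, x v := by
  have h1 : ∀ f : Fin (r - 1) → Fin n,
      adjEntry r (completeEdges r n) j f * ∏ i, x (f i)
        = if Function.Injective f ∧ ∀ i, f i ≠ j then
            (1 / ((r - 1).factorial : ℂ)) * ∏ i, x (f i) else 0 := by
    intro f
    rw [adjEntry_complete hr]
    split <;> simp
  rw [Finset.sum_congr rfl fun f _ => h1 f, ← Finset.sum_filter, ← Finset.mul_sum,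
    sum_inj_avoid, ← mul_assoc]
  have hfac : ((r - 1).factorial : ℂ) ≠ 0 := by
    exact_mod_cast Nat.factorial_ne_zero (r - 1)
  rw [one_div, inv_mul_cancel₀ hfac, one_mul]

lemma diag_sum {r n : ℕ} (c : ℂ) (x : Fin n → ℂ) (j : Fin n) :
    ∑ f : Fin (r - 1) → Fin n, (if ∀ i, f i = j then c else 0) * ∏ i, x (f i)
      = c * x j ^ (r - 1) := by
  rw [Finset.sum_eq_single (fun _ => j)]
  · simp [Finset.prod_const]
  · intro f _ hf
    have : ¬ ∀ i, f i = j := fun h => hf (funext h)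
    simp [this]
  · simp

lemma hdegree_complete {r n : ℕ} (hr : 1 ≤ r) (v : Fin n) :
    hdegree (completeEdges r n) v = (n - 1).choose (r - 1) := by
  unfold hdegree
  have := Finset.card_bij'
    (s := (completeEdges r n).filter fun e => v ∈ e)
    (t := ((Finset.univ : Finset (Fin n)).erase v).powersetCard (r - 1))
    (i := fun e _ => e.erase v) (j := fun S _ => insert v S) ?hi ?hj ?left ?right
  · rw [this, Finset.card_powersetCard, Finset.card_erase_of_mem (Finset.mem_univ v),
      Finset.card_univ, Fintype.card_fin]
  case hi =>
    intro e he
    simp only [Finset.mem_filter, mem_completeEdges] at he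
    rw [Finset.mem_powersetCard]
    exact ⟨Finset.erase_subset_erase v (Finset.subset_univ e),
      by rw [Finset.card_erase_of_mem he.2, he.1]⟩
  case hj =>
    intro S hS
    rw [Finset.mem_powersetCard] at hS
    have hv : v ∉ S := fun h => (Finset.mem_erase.mp (hS.1 h)).1 rfl
    simp only [Finset.mem_filter, mem_completeEdges]
    rw [Finset.card_insert_of_notMem hv, hS.2]
    exact ⟨by omega, Finset.mem_insert_self v S⟩
  case left =>
    intro e he
    simp only [Finset.mem_filter] at he
    exact Finset.insert_erase he.2
  case right =>
    intro S hS
    rw [Finset.mem_powersetCard] at hS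
    have hv : v ∉ S := fun h => (Finset.mem_erase.mp (hS.1 h)).1 rfl
    exact Finset.erase_insert hv

lemma sum_Aj {n k : ℕ} (x : Fin n → ℂ) :
    ∑ j, ∑ S ∈ ((Finset.univ : Finset (Fin n)).erase j).powersetCard k, ∏ v ∈ S, x v
      = ((n - k : ℕ) : ℂ) *
        ∑ S ∈ (Finset.univ : Finset (Fin n)).powersetCard k, ∏ v ∈ S, x v := by
  have h1 : ∀ j : Fin n, ((Finset.univ : Finset (Fin n)).erase j).powersetCard k
      = ((Finset.univ : Finset (Fin n)).powersetCard k).filter fun S => j ∉ S := by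
    intro j
    ext S
    simp only [Finset.mem_powersetCard, Finset.mem_filter, Finset.subset_erase]
    tauto
  calc ∑ j, ∑ S ∈ ((Finset.univ : Finset (Fin n)).erase j).powersetCard k, ∏ v ∈ S, x v
      = ∑ j, ∑ S ∈ (Finset.univ : Finset (Fin n)).powersetCard k,
          if j ∉ S then ∏ v ∈ S, x v else 0 := by
        refine Finset.sum_congr rfl fun j _ => ?_
        rw [h1 j, Finset.sum_filter]
    _ = ∑ S ∈ (Finset.univ : Finset (Fin n)).powersetCard k,
          ∑ j, if j ∉ S then ∏ v ∈ S, x v else 0 := Finset.sum_comm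
    _ = ((n - k : ℕ) : ℂ) *
        ∑ S ∈ (Finset.univ : Finset (Fin n)).powersetCard k, ∏ v ∈ S, x v := by
        rw [Finset.mul_sum]
        refine Finset.sum_congr rfl fun S hS => ?_
        rw [Finset.mem_powersetCard] at hS
        rw [← Finset.sum_filter, Finset.sum_const]
        have h2 : Finset.univ.filter (fun j => j ∉ S) = Sᶜ := by
          ext j; simp
        rw [h2, Finset.card_compl, Fintype.card_fin, hS.2, nsmul_eq_mul]

lemma key_iff {n k : ℕ} (hk : k < n) (x : Fin n → ℂ) (c : ℂ) (hc : c ≠ 0)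
    (h : ∀ j, ∑ S ∈ ((Finset.univ : Finset (Fin n)).erase j).powersetCard k,
        ∏ v ∈ S, x v = c * x j ^ k) :
    (∑ S ∈ (Finset.univ : Finset (Fin n)).powersetCard k, ∏ v ∈ S, x v = 0)
      ↔ ∑ i, x i ^ k = 0 := by
  have heq : ((n - k : ℕ) : ℂ) *
      ∑ S ∈ (Finset.univ : Finset (Fin n)).powersetCard k, ∏ v ∈ S, x v
        = c * ∑ i, x i ^ k := by
    rw [← sum_Aj, Finset.sum_congr rfl fun j _ => h j, ← Finset.mul_sum]
  have hnk : ((n - k : ℕ) : ℂ) ≠ 0 := by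
    rw [Nat.cast_ne_zero]; omega
  constructor
  · intro h0
    have := heq.symm
    rw [h0, mul_zero] at this
    rcases mul_eq_zero.mp this with h' | h'
    · exact absurd h' hc
    · exact h'
  · intro h0
    rw [h0, mul_zero] at heq
    rcases mul_eq_zero.mp heq with h' | h'
    · exact absurd h' hnk
    · exact h'

lemma lap_apply {r n : ℕ} (hr : 1 ≤ r) (x : Fin n → ℂ) (j : Fin n) :
    ∑ f : Fin (r - 1) → Fin n, lapEntry r (completeEdges r n) j f * ∏ i, x (f i)
      = ((n - 1).choose (r - 1) : ℂ) * x j ^ (r - 1)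
        - ∑ S ∈ ((Finset.univ : Finset (Fin n)).erase j).powersetCard (r - 1),
            ∏ v ∈ S, x v := by
  unfold lapEntry
  simp only [sub_mul]
  rw [Finset.sum_sub_distrib, diag_sum, adj_sum hr, hdegree_complete hr]

lemma signless_apply {r n : ℕ} (hr : 1 ≤ r) (x : Fin n → ℂ) (j : Fin n) :
    ∑ f : Fin (r - 1) → Fin n, signlessEntry r (completeEdges r n) j f * ∏ i, x (f i)
      = ((n - 1).choose (r - 1) : ℂ) * x j ^ (r - 1)
        + ∑ S ∈ ((Finset.univ : Finset (Fin n)).erase j).powersetCard (r - 1),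
            ∏ v ∈ S, x v := by
  unfold signlessEntry
  simp only [add_mul]
  rw [Finset.sum_add_distrib, diag_sum, adj_sum hr, hdegree_complete hr]


/-- eigenpairs of the Laplacian and signless Laplacian of `K_n^{(r)}`. -/
theorem stmt2 (r n : ℕ) (hr : 3 ≤ r) (hn : r ≤ n) :
    (∀ (mu : ℂ) (z : Fin n → ℂ), mu ≠ ((n - 1).choose (r - 1) : ℂ) →
        IsEigenpair r (lapEntry r (completeEdges r n)) mu z →
        (IsNonMainVec r z ↔ ∑ i, z i ^ (r - 1) = 0)) ∧
    IsNonMainEigenvalue r (lapEntry r (completeEdges r n)) ((n - 1).choose (r - 1) : ℂ) ∧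
    (∀ (beta : ℂ) (x : Fin n → ℂ), beta ≠ ((n - 1).choose (r - 1) : ℂ) →
        IsEigenpair r (signlessEntry r (completeEdges r n)) beta x →
        (IsNonMainVec r x ↔ ∑ i, x i ^ (r - 1) = 0)) ∧
    IsNonMainEigenvalue r (signlessEntry r (completeEdges r n))
      ((n - 1).choose (r - 1) : ℂ) := by
  have hr1 : 1 ≤ r := by omega
  have hk : r - 1 < n := by omega
  have hn0 : 0 < n := by omega
  set p : Fin n := ⟨0, hn0⟩ with hp
  set z0 : Fin n → ℂ := fun i => if i = p then 1 else 0 with hz0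
  have hprod : ∀ S : Finset (Fin n), S.card = r - 1 → ∏ v ∈ S, z0 v = 0 := by
    intro S hS
    have h2 : 1 < S.card := by omega
    obtain ⟨a, ha, b, hb, hab⟩ := Finset.one_lt_card.mp h2
    rcases eq_or_ne a p with h | h
    · refine Finset.prod_eq_zero hb ?_
      have : b ≠ p := h ▸ hab.symm
      simp [hz0, this]
    · exact Finset.prod_eq_zero ha (by simp [hz0, h])
  have hz0ne : z0 ≠ 0 := by
    intro h
    have := congrFun h p
    simp [hz0] at this
  have hAj0 : ∀ j : Fin n,
      ∑ S ∈ ((Finset.univ : Finset (Fin n)).erase j).powersetCard (r - 1),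
        ∏ v ∈ S, z0 v = 0 := by
    intro j
    refine Finset.sum_eq_zero fun S hS => ?_
    exact hprod S (Finset.mem_powersetCard.mp hS).2
  have hnm : IsNonMainVec r z0 := by
    unfold IsNonMainVec
    refine Finset.sum_eq_zero fun S hS => ?_
    exact hprod S (Finset.mem_powersetCard.mp hS).2
  have heigL : IsEigenpair r (lapEntry r (completeEdges r n))
      ((n - 1).choose (r - 1) : ℂ) z0 := by
    refine ⟨hz0ne, fun j => ?_⟩
    rw [lap_apply hr1, hAj0, sub_zero]
  have heigQ : IsEigenpair r (signlessEntry r (completeEdges r n))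
      ((n - 1).choose (r - 1) : ℂ) z0 := by
    refine ⟨hz0ne, fun j => ?_⟩
    rw [signless_apply hr1, hAj0, add_zero]
  refine ⟨?_, ⟨z0, heigL, hnm⟩, ?_, ⟨z0, heigQ, hnm⟩⟩
  · rintro mu z hmu ⟨-, heq⟩
    have h : ∀ j, ∑ S ∈ ((Finset.univ : Finset (Fin n)).erase j).powersetCard (r - 1),
        ∏ v ∈ S, z v = (((n - 1).choose (r - 1) : ℂ) - mu) * z j ^ (r - 1) := by
      intro j
      have h1 := heq j
      rw [lap_apply hr1] at h1
      linear_combination -h1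
    exact key_iff hk z _ (sub_ne_zero.mpr (Ne.symm hmu)) h
  · rintro beta x hbeta ⟨-, heq⟩
    have h : ∀ j, ∑ S ∈ ((Finset.univ : Finset (Fin n)).erase j).powersetCard (r - 1),
        ∏ v ∈ S, x v = (beta - ((n - 1).choose (r - 1) : ℂ)) * x j ^ (r - 1) := by
      intro j
      have h1 := heq j
      rw [signless_apply hr1] at h1
      linear_combination h1
    exact key_iff hk x _ (sub_ne_zero.mpr hbeta) h
end

section
/- Let H1 be a d1-regular and H2 a d2-regular r-uniform hypergraph (r ≥ 2), and let H = H1 ⊗ H2 be their Kronecker product. If (β, w) is an eigenpair of the signless Laplacian Q(H1) and (θ, y) is an eigenpair of the signless Laplacian Q(H2), then ((r−1)!·(βθ + 2 d1 d2 − β d2 − θ d1), w ⊗ y) is an eigenpair of Q(H), where (w ⊗ y)_{(u,v)} = w_u y_v. -/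
open Finset
open scoped Classical

/-- The Kronecker product of two `r`-uniform hypergraphs: a set `e` of pairs is a
hyperedge iff `e = {(u i, v i) : i}` for injective enumerations `u`, `v` of a hyperedge
of `H₁` and of `H₂` respectively. -/
noncomputable def kronEdges (r : ℕ) {V₁ V₂ : Type*} [Fintype V₁] [DecidableEq V₁]
    [Fintype V₂] [DecidableEq V₂] (E₁ : Finset (Finset V₁)) (E₂ : Finset (Finset V₂)) :
    Finset (Finset (V₁ × V₂)) :=
  Finset.univ.filter (fun e =>
    ∃ (u : Fin r → V₁) (v : Fin r → V₂),
      Function.Injective u ∧ Function.Injective v ∧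
      Finset.image u Finset.univ ∈ E₁ ∧ Finset.image v Finset.univ ∈ E₂ ∧
      e = Finset.image (fun i => (u i, v i)) Finset.univ)


lemma card_inj_image {V : Type*} [Fintype V] [DecidableEq V] (k : ℕ) (S : Finset V)
    (hS : S.card = k) :
    (Finset.univ.filter (fun f : Fin k → V =>
      Function.Injective f ∧ Finset.image f Finset.univ = S)).card = k.factorial := by
  rw [← Fintype.card_subtype]
  have e : {f : Fin k → V // Function.Injective f ∧ Finset.image f Finset.univ = S} ≃
      (Fin k ↪ S) := by
    refine ⟨fun f => ⟨fun i => ⟨f.1 i, ?_⟩, fun a b h => f.2.1 (congrArg Subtype.val h)⟩,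
      fun g => ⟨fun i => (g i : V), ?_, ?_⟩, ?_, ?_⟩
    · have h := mem_image_of_mem f.1 (mem_univ i); rwa [f.2.2] at h
    · exact fun a b h => g.injective (Subtype.ext h)
    · apply Finset.eq_of_subset_of_card_le
      · intro a ha
        simp only [mem_image, mem_univ, true_and] at ha
        obtain ⟨i, rfl⟩ := ha
        exact (g i).2
      · rw [hS, Finset.card_image_of_injective _ (fun a b h => g.injective (Subtype.ext h)),
          Finset.card_univ, Fintype.card_fin]
    · intro f; exact Subtype.ext rfl
    · intro g; exact Function.Embedding.ext fun i => Subtype.ext rfl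
  rw [Fintype.card_congr e, Fintype.card_embedding_eq]
  simp [Fintype.card_coe, hS, Nat.descFactorial_self]

lemma adjsum {V : Type*} [Fintype V] [DecidableEq V] (r : ℕ) (hr : 2 ≤ r)
    (E : Finset (Finset V)) (hu : ∀ e ∈ E, e.card = r) (j : V) :
    ∑ f : Fin (r - 1) → V, adjEntry r E j f = (hdegree E j : ℂ) := by
  classical
  set P : (Fin (r - 1) → V) → Prop := fun f =>
    Function.Injective f ∧ (∀ i, f i ≠ j) ∧ insert j (Finset.image f Finset.univ) ∈ E with hP
  have h1 : ∑ f : Fin (r - 1) → V, adjEntry r E j f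
      = (Finset.univ.filter P).card * (1 / ((r - 1).factorial : ℂ)) := by
    have hf : ∀ f, adjEntry r E j f = if P f then (1 / ((r - 1).factorial : ℂ)) else 0 :=
      fun f => rfl
    rw [Finset.sum_congr rfl (fun f _ => hf f), ← Finset.sum_filter, Finset.sum_const, nsmul_eq_mul]
  have hcard : (Finset.univ.filter P).card = hdegree E j * (r - 1).factorial := by
    rw [Finset.card_eq_sum_card_fiberwise
      (f := fun f => insert j (Finset.image f Finset.univ))
      (t := E.filter fun e => j ∈ e)
      (fun f hf => by
        simp only [hP, mem_coe, mem_filter, mem_univ, true_and] at hf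
        exact Finset.mem_filter.2 ⟨hf.2.2, Finset.mem_insert_self _ _⟩)]
    have key : ∀ e ∈ E.filter (fun e => j ∈ e),
        ((Finset.univ.filter P).filter
          (fun f => insert j (Finset.image f Finset.univ) = e)).card
          = (r - 1).factorial := by
      intro e he
      rw [Finset.mem_filter] at he
      have hec : e.card = r := hu e he.1
      have hje : j ∈ e := he.2
      rw [Finset.filter_filter]
      have hset : (Finset.univ.filter fun f : Fin (r - 1) → V =>
          P f ∧ insert j (Finset.image f Finset.univ) = e)
          = Finset.univ.filter (fun f => Function.Injective f ∧
              Finset.image f Finset.univ = e.erase j) := by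
        apply Finset.filter_congr
        rintro f -
        simp only [hP]
        constructor
        · rintro ⟨⟨hinj, hne, -⟩, heq⟩
          refine ⟨hinj, Finset.eq_of_subset_of_card_le ?_ ?_⟩
          · intro a ha
            simp only [mem_image, mem_univ, true_and] at ha
            obtain ⟨i, rfl⟩ := ha
            exact Finset.mem_erase.2 ⟨hne i, heq ▸ Finset.mem_insert_of_mem
              (mem_image_of_mem _ (mem_univ i))⟩
          · rw [Finset.card_erase_of_mem hje, hec,
              Finset.card_image_of_injective _ hinj, Finset.card_univ, Fintype.card_fin]
        · rintro ⟨hinj, himg⟩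
          have hne : ∀ i, f i ≠ j := fun i => by
            have : f i ∈ e.erase j := himg ▸ mem_image_of_mem _ (mem_univ i)
            exact Finset.ne_of_mem_erase this
          have heq : insert j (Finset.image f Finset.univ) = e := by
            rw [himg, Finset.insert_erase hje]
          exact ⟨⟨hinj, hne, heq ▸ he.1⟩, heq⟩
      rw [hset, card_inj_image (r - 1) (e.erase j)
        (by rw [Finset.card_erase_of_mem hje, hec])]
    rw [Finset.sum_congr rfl key, Finset.sum_const, smul_eq_mul]
    rfl
  rw [h1, hcard]
  have hfac : ((r - 1).factorial : ℂ) ≠ 0 := Nat.cast_ne_zero.2 (Nat.factorial_ne_zero _)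
  push_cast
  field_simp

def extFun {V : Type*} (r : ℕ) (j : V) (f : Fin (r - 1) → V) : Fin r → V :=
  fun i => if h : (i : ℕ) < r - 1 then f ⟨i, h⟩ else j

lemma extFun_inj {V : Type*} (r : ℕ) (j : V) (f : Fin (r - 1) → V)
    (hf : Function.Injective f) (hne : ∀ i, f i ≠ j) :
    Function.Injective (extFun r j f) := by
  intro a b hab
  unfold extFun at hab
  split at hab <;> split at hab
  · exact Fin.ext (congrArg Fin.val (hf hab) : _)
  · exact absurd hab (hne _)
  · exact absurd hab.symm (hne _)
  · have := a.2; have := b.2; omega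


lemma extFun_apply_lt {V : Type*} (r : ℕ) (j : V) (f : Fin (r - 1) → V) (i : Fin (r - 1)) :
    extFun r j f ⟨i, i.2.trans_le (Nat.sub_le r 1)⟩ = f i := by
  unfold extFun
  rw [dif_pos i.2]

lemma extFun_image {V : Type*} [DecidableEq V] [Fintype V] (r : ℕ) (hr : 2 ≤ r)
    (j : V) (f : Fin (r - 1) → V) :
    Finset.image (extFun r j f) Finset.univ = insert j (Finset.image f Finset.univ) := by
  ext a
  simp only [mem_image, mem_univ, true_and, mem_insert]
  constructor
  · rintro ⟨i, rfl⟩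
    unfold extFun
    split
    · exact Or.inr ⟨_, rfl⟩
    · exact Or.inl rfl
  · rintro (rfl | ⟨b, -, rfl⟩)
    · refine ⟨⟨r - 1, by omega⟩, ?_⟩
      unfold extFun
      rw [dif_neg (by simp)]
    · exact ⟨⟨b, b.2.trans_le (Nat.sub_le r 1)⟩, by unfold extFun; rw [dif_pos b.2]⟩

lemma extFun_pair {V₁ V₂ : Type*} (r : ℕ) (j₁ : V₁) (j₂ : V₂)
    (f₁ : Fin (r - 1) → V₁) (f₂ : Fin (r - 1) → V₂) :
    extFun r (j₁, j₂) (fun i => (f₁ i, f₂ i)) =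
      fun i => (extFun r j₁ f₁ i, extFun r j₂ f₂ i) := by
  funext i
  unfold extFun
  split <;> rfl

lemma kron_card {V₁ V₂ : Type*} [Fintype V₁] [DecidableEq V₁] [Fintype V₂] [DecidableEq V₂]
    (r : ℕ) (E₁ : Finset (Finset V₁)) (E₂ : Finset (Finset V₂)) :
    ∀ e ∈ kronEdges r E₁ E₂, e.card = r := by
  intro e he
  rw [kronEdges, Finset.mem_filter] at he
  obtain ⟨-, u, v, hu, hv, -, -, rfl⟩ := he
  rw [Finset.card_image_of_injective _ (fun a b h => hu (congrArg Prod.fst h)),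
    Finset.card_univ, Fintype.card_fin]

lemma adj_kron {V₁ V₂ : Type*} [Fintype V₁] [DecidableEq V₁] [Fintype V₂] [DecidableEq V₂]
    (r : ℕ) (hr : 2 ≤ r) (E₁ : Finset (Finset V₁)) (E₂ : Finset (Finset V₂))
    (j₁ : V₁) (j₂ : V₂) (f₁ : Fin (r - 1) → V₁) (f₂ : Fin (r - 1) → V₂) :
    adjEntry r (kronEdges r E₁ E₂) (j₁, j₂) (fun i => (f₁ i, f₂ i)) =
      ((r - 1).factorial : ℂ) * adjEntry r E₁ j₁ f₁ * adjEntry r E₂ j₂ f₂ := by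
  have hfac : ((r - 1).factorial : ℂ) ≠ 0 := Nat.cast_ne_zero.2 (Nat.factorial_ne_zero _)
  have hiff : (Function.Injective (fun i => (f₁ i, f₂ i)) ∧
      (∀ i, (f₁ i, f₂ i) ≠ (j₁, j₂)) ∧
      insert (j₁, j₂) (Finset.image (fun i => (f₁ i, f₂ i)) Finset.univ)
        ∈ kronEdges r E₁ E₂) ↔
      ((Function.Injective f₁ ∧ (∀ i, f₁ i ≠ j₁) ∧
        insert j₁ (Finset.image f₁ Finset.univ) ∈ E₁) ∧
       (Function.Injective f₂ ∧ (∀ i, f₂ i ≠ j₂) ∧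
        insert j₂ (Finset.image f₂ Finset.univ) ∈ E₂)) := by
    constructor
    · rintro ⟨hinj, hne, hmem⟩
      rw [kronEdges, Finset.mem_filter] at hmem
      obtain ⟨-, u, v, hu, hv, hue, hve, heq⟩ := hmem
      -- fst is injective on the edge
      have hfst : ∀ p ∈ insert (j₁, j₂) (Finset.image (fun i => (f₁ i, f₂ i)) Finset.univ),
          ∀ q ∈ insert (j₁, j₂) (Finset.image (fun i => (f₁ i, f₂ i)) Finset.univ),
          p.1 = q.1 → p = q := by
        intro p hp q hq h1
        rw [heq] at hp hq
        simp only [Finset.mem_image, Finset.mem_univ, true_and] at hp hq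
        obtain ⟨a, rfl⟩ := hp
        obtain ⟨b, rfl⟩ := hq
        simp only at h1 ⊢
        rw [hu h1]
      have hsnd : ∀ p ∈ insert (j₁, j₂) (Finset.image (fun i => (f₁ i, f₂ i)) Finset.univ),
          ∀ q ∈ insert (j₁, j₂) (Finset.image (fun i => (f₁ i, f₂ i)) Finset.univ),
          p.2 = q.2 → p = q := by
        intro p hp q hq h1
        rw [heq] at hp hq
        simp only [Finset.mem_image, Finset.mem_univ, true_and] at hp hq
        obtain ⟨a, rfl⟩ := hp
        obtain ⟨b, rfl⟩ := hq
        simp only at h1 ⊢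
        rw [hv h1]
      have hmemf : ∀ i : Fin (r - 1), (f₁ i, f₂ i) ∈
          insert (j₁, j₂) (Finset.image (fun i => (f₁ i, f₂ i)) Finset.univ) :=
        fun i => Finset.mem_insert_of_mem (Finset.mem_image_of_mem _ (Finset.mem_univ i))
      have hjmem : ((j₁, j₂) : V₁ × V₂) ∈
          insert (j₁, j₂) (Finset.image (fun i => (f₁ i, f₂ i)) Finset.univ) :=
        Finset.mem_insert_self _ _
      have hinj1 : Function.Injective f₁ := by
        intro a b h
        have := hfst _ (hmemf a) _ (hmemf b) h
        exact hinj this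
      have hinj2 : Function.Injective f₂ := by
        intro a b h
        have := hsnd _ (hmemf a) _ (hmemf b) h
        exact hinj this
      have hne1 : ∀ i, f₁ i ≠ j₁ := by
        intro i h
        exact hne i (hfst _ (hmemf i) _ hjmem h)
      have hne2 : ∀ i, f₂ i ≠ j₂ := by
        intro i h
        exact hne i (hsnd _ (hmemf i) _ hjmem h)
      have himg1 : insert j₁ (Finset.image f₁ Finset.univ) = Finset.image u Finset.univ := by
        have h1 : Finset.image Prod.fst
            (insert (j₁, j₂) (Finset.image (fun i => (f₁ i, f₂ i)) Finset.univ))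
            = insert j₁ (Finset.image f₁ Finset.univ) := by
          rw [Finset.image_insert, Finset.image_image]
          rfl
        have h2 : Finset.image Prod.fst
            (Finset.image (fun i => (u i, v i)) Finset.univ) = Finset.image u Finset.univ := by
          rw [Finset.image_image]
          rfl
        rw [← h1, heq, h2]
      have himg2 : insert j₂ (Finset.image f₂ Finset.univ) = Finset.image v Finset.univ := by
        have h1 : Finset.image Prod.snd
            (insert (j₁, j₂) (Finset.image (fun i => (f₁ i, f₂ i)) Finset.univ))
            = insert j₂ (Finset.image f₂ Finset.univ) := by
          rw [Finset.image_insert, Finset.image_image]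
          rfl
        have h2 : Finset.image Prod.snd
            (Finset.image (fun i => (u i, v i)) Finset.univ) = Finset.image v Finset.univ := by
          rw [Finset.image_image]
          rfl
        rw [← h1, heq, h2]
      exact ⟨⟨hinj1, hne1, himg1 ▸ hue⟩, ⟨hinj2, hne2, himg2 ▸ hve⟩⟩
    · rintro ⟨⟨hinj1, hne1, hmem1⟩, ⟨hinj2, hne2, hmem2⟩⟩
      refine ⟨fun a b h => hinj1 (congrArg Prod.fst h),
        fun i h => hne1 i (congrArg Prod.fst h), ?_⟩
      rw [kronEdges, Finset.mem_filter]
      refine ⟨Finset.mem_univ _, extFun r j₁ f₁, extFun r j₂ f₂,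
        extFun_inj r j₁ f₁ hinj1 hne1, extFun_inj r j₂ f₂ hinj2 hne2,
        ?_, ?_, ?_⟩
      · rw [extFun_image r hr]; exact hmem1
      · rw [extFun_image r hr]; exact hmem2
      · have : (fun i => (extFun r j₁ f₁ i, extFun r j₂ f₂ i))
            = extFun r (j₁, j₂) (fun i => (f₁ i, f₂ i)) := (extFun_pair r j₁ j₂ f₁ f₂).symm
        rw [this, extFun_image r hr]
  rw [adjEntry, adjEntry, adjEntry]
  by_cases h : (Function.Injective f₁ ∧ (∀ i, f₁ i ≠ j₁) ∧
        insert j₁ (Finset.image f₁ Finset.univ) ∈ E₁) ∧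
       (Function.Injective f₂ ∧ (∀ i, f₂ i ≠ j₂) ∧
        insert j₂ (Finset.image f₂ Finset.univ) ∈ E₂)
  · rw [if_pos (hiff.2 h), if_pos h.1, if_pos h.2]
    field_simp
  · rw [if_neg (fun hc => h (hiff.1 hc))]
    rcases not_and_or.1 h with h1 | h1
    · rw [if_neg h1]; ring
    · rw [if_neg h1]; ring

lemma qsum_split {V : Type*} [Fintype V] [DecidableEq V] (r : ℕ) (hr : 2 ≤ r)
    (E : Finset (Finset V)) (j : V) (x : V → ℂ) :
    ∑ f : Fin (r - 1) → V, signlessEntry r E j f * ∏ i, x (f i)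
      = (hdegree E j : ℂ) * x j ^ (r - 1)
        + ∑ f : Fin (r - 1) → V, adjEntry r E j f * ∏ i, x (f i) := by
  simp_rw [signlessEntry, add_mul, Finset.sum_add_distrib]
  congr 1
  have hc : ∀ f : Fin (r - 1) → V,
      (if ∀ i, f i = j then (hdegree E j : ℂ) else 0) * ∏ i, x (f i)
        = if f = (fun _ : Fin (r - 1) => j) then (hdegree E j : ℂ) * ∏ i, x (f i) else 0 := by
    intro f
    by_cases h : ∀ i, f i = j
    · rw [if_pos h, if_pos (funext h)]
    · rw [if_neg h, if_neg (fun hf => h fun i => congrFun hf i), zero_mul]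
  rw [Finset.sum_congr rfl (fun f _ => hc f),
    Finset.sum_ite_eq' Finset.univ (fun _ : Fin (r - 1) => j)]
  simp [Finset.prod_const, Finset.card_univ]

/-- signless Laplacian eigenpairs of the Kronecker product of regular
hypergraphs. -/
theorem stmt8 {V₁ V₂ : Type*} [Fintype V₁] [DecidableEq V₁] [Fintype V₂] [DecidableEq V₂]
    (r : ℕ) (hr : 2 ≤ r) (d₁ d₂ : ℕ)
    (E₁ : Finset (Finset V₁)) (E₂ : Finset (Finset V₂))
    (hu₁ : ∀ e ∈ E₁, e.card = r) (hu₂ : ∀ e ∈ E₂, e.card = r)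
    (hreg₁ : ∀ v, hdegree E₁ v = d₁) (hreg₂ : ∀ v, hdegree E₂ v = d₂)
    (beta theta : ℂ) (w : V₁ → ℂ) (y : V₂ → ℂ)
    (hw : IsEigenpair r (signlessEntry r E₁) beta w)
    (hy : IsEigenpair r (signlessEntry r E₂) theta y) :
    IsEigenpair r (signlessEntry r (kronEdges r E₁ E₂))
      (((r - 1).factorial : ℂ) * (beta * theta + 2 * d₁ * d₂ - beta * d₂ - theta * d₁))
      (fun p => w p.1 * y p.2) := by
  obtain ⟨hw0, hwe⟩ := hw
  obtain ⟨hy0, hye⟩ := hy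
  have kron_sum : ∀ (j₁ : V₁) (j₂ : V₂) (a : V₁ → ℂ) (b : V₂ → ℂ),
      ∑ f : Fin (r - 1) → V₁ × V₂, adjEntry r (kronEdges r E₁ E₂) (j₁, j₂) f
        * ∏ i, (a (f i).1 * b (f i).2)
      = ((r - 1).factorial : ℂ)
        * ((∑ f₁ : Fin (r - 1) → V₁, adjEntry r E₁ j₁ f₁ * ∏ i, a (f₁ i))
        * (∑ f₂ : Fin (r - 1) → V₂, adjEntry r E₂ j₂ f₂ * ∏ i, b (f₂ i))) := by
    intro j₁ j₂ a b
    have step1 : ∑ f : Fin (r - 1) → V₁ × V₂, adjEntry r (kronEdges r E₁ E₂) (j₁, j₂) f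
          * ∏ i, (a (f i).1 * b (f i).2)
        = ∑ p : (Fin (r - 1) → V₁) × (Fin (r - 1) → V₂),
            adjEntry r (kronEdges r E₁ E₂) (j₁, j₂) (fun i => (p.1 i, p.2 i))
              * ∏ i, (a (p.1 i) * b (p.2 i)) := by
      exact (Fintype.sum_bijective
        (Equiv.arrowProdEquivProdArrow (Fin (r - 1)) (fun _ => V₁) (fun _ => V₂)).symm
        (Equiv.bijective _) _ _ (fun p => rfl)).symm
    rw [step1, Fintype.sum_prod_type]
    simp_rw [adj_kron r hr E₁ E₂ j₁ j₂, Finset.prod_mul_distrib]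
    rw [Finset.sum_mul_sum, Finset.mul_sum]
    simp_rw [Finset.mul_sum]
    exact Finset.sum_congr rfl fun f₁ _ => Finset.sum_congr rfl fun f₂ _ => by ring
  have hA1 : ∀ j₁ : V₁, ∑ f₁ : Fin (r - 1) → V₁, adjEntry r E₁ j₁ f₁ * ∏ i, w (f₁ i)
      = (beta - (d₁ : ℂ)) * w j₁ ^ (r - 1) := by
    intro j₁
    have h := hwe j₁
    rw [qsum_split r hr, hreg₁] at h
    linear_combination h
  have hA2 : ∀ j₂ : V₂, ∑ f₂ : Fin (r - 1) → V₂, adjEntry r E₂ j₂ f₂ * ∏ i, y (f₂ i)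
      = (theta - (d₂ : ℂ)) * y j₂ ^ (r - 1) := by
    intro j₂
    have h := hye j₂
    rw [qsum_split r hr, hreg₂] at h
    linear_combination h
  constructor
  · obtain ⟨a, ha⟩ := Function.ne_iff.1 hw0
    obtain ⟨b, hb⟩ := Function.ne_iff.1 hy0
    exact Function.ne_iff.2 ⟨(a, b), mul_ne_zero ha hb⟩
  rintro ⟨j₁, j₂⟩
  simp only
  have hdeg : (hdegree (kronEdges r E₁ E₂) (j₁, j₂) : ℂ)
      = ((r - 1).factorial : ℂ) * ((d₁ : ℂ) * d₂) := by
    rw [← adjsum r hr _ (kron_card r E₁ E₂) (j₁, j₂)]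
    have h := kron_sum j₁ j₂ (fun _ => 1) (fun _ => 1)
    simp only [mul_one, one_mul, Finset.prod_const_one] at h
    rw [h, adjsum r hr E₁ hu₁, adjsum r hr E₂ hu₂, hreg₁, hreg₂]
  have hks := kron_sum j₁ j₂ w y
  have hq := qsum_split r hr (kronEdges r E₁ E₂) (j₁, j₂) (fun p => w p.1 * y p.2)
  simp only at hq
  rw [hq, hdeg, hks, hA1 j₁, hA2 j₂]
  ring
end
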